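/- arXiv:2603.14955 — 3 statements merged into one kernel-verified Lean document; each statement's English description precedes it below -/
import Mathlib

section
/- Let ⟨[0,1], ⊕_p⟩ be a convex algebra satisfying (MO), (UC) and (LC). Then for all x, y ∈ [0,1] with x < y such that the half-open interval (x, y] contains no element of E^⊕, the map Γ_{x,y} : [0,1] → [x,y] defined by Γ_{x,y}(t) = y ⊕_t x is a strictly increasing bijection onto [x,y]. -/
open Set Filter Topology

/-- A convex algebra on the interval `[0,1] ⊆ ℝ`: `op p x y` denotes `x ⊕_p y`,
for `p ∈ (0,1)`, extended to `p ∈ [0,1]` by the projection axioms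
`x ⊕_1 y = x` and `x ⊕_0 y = y`.  All axioms are required only on `[0,1]`;
values of `op` outside `[0,1]` are irrelevant. -/
structure UCA where
  op : ℝ → ℝ → ℝ → ℝ
  mem : ∀ p ∈ Set.Icc (0:ℝ) 1, ∀ x ∈ Set.Icc (0:ℝ) 1, ∀ y ∈ Set.Icc (0:ℝ) 1,
      op p x y ∈ Set.Icc (0:ℝ) 1
  idem : ∀ p ∈ Set.Ioo (0:ℝ) 1, ∀ x ∈ Set.Icc (0:ℝ) 1, op p x x = x
  comm : ∀ p ∈ Set.Ioo (0:ℝ) 1, ∀ x ∈ Set.Icc (0:ℝ) 1, ∀ y ∈ Set.Icc (0:ℝ) 1,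
      op p x y = op (1 - p) y x
  assoc : ∀ p ∈ Set.Ioo (0:ℝ) 1, ∀ q ∈ Set.Ioo (0:ℝ) 1,
      ∀ x ∈ Set.Icc (0:ℝ) 1, ∀ y ∈ Set.Icc (0:ℝ) 1, ∀ z ∈ Set.Icc (0:ℝ) 1,
      op q (op p x y) z = op (p * q) x (op ((1 - p) * q / (1 - p * q)) y z)
  proj1 : ∀ x ∈ Set.Icc (0:ℝ) 1, ∀ y ∈ Set.Icc (0:ℝ) 1, op 1 x y = x
  proj0 : ∀ x ∈ Set.Icc (0:ℝ) 1, ∀ y ∈ Set.Icc (0:ℝ) 1, op 0 x y = y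

/-- Monotonicity (MO): `x ≤ x'` implies `x ⊕_p y ≤ x' ⊕_p y`. -/
def UCA.MO (A : UCA) : Prop :=
  ∀ x ∈ Set.Icc (0:ℝ) 1, ∀ x' ∈ Set.Icc (0:ℝ) 1, ∀ y ∈ Set.Icc (0:ℝ) 1,
    ∀ p ∈ Set.Ioo (0:ℝ) 1, x ≤ x' → A.op p x y ≤ A.op p x' y

/-- (UC): for `x, y ∈ [0,1)` and `p ∈ (0,1)`,
`limsup_{ε→0⁺} ((x+ε) ⊕_p (y+ε)) ≤ x ⊕_p y`. -/
def UCA.UC (A : UCA) : Prop :=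
  ∀ x ∈ Set.Ico (0:ℝ) 1, ∀ y ∈ Set.Ico (0:ℝ) 1, ∀ p ∈ Set.Ioo (0:ℝ) 1,
    Filter.limsup (fun ε => A.op p (x + ε) (y + ε)) (𝓝[>] (0:ℝ)) ≤ A.op p x y

/-- (LC): for `x ≤ y` in `[0,1]`, `liminf_{p→1⁻} (y ⊕_p x) ≥ y`. -/
def UCA.LC (A : UCA) : Prop :=
  ∀ x ∈ Set.Icc (0:ℝ) 1, ∀ y ∈ Set.Icc (0:ℝ) 1, x ≤ y →
    y ≤ Filter.liminf (fun p => A.op p y x) (𝓝[<] (1:ℝ))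

/-- `y ⊳ x` : `y` eats `x`, i.e. `y ⊕_t x = y` for all `t ∈ (0,1]`. -/
def UCA.Eats (A : UCA) (y x : ℝ) : Prop :=
  ∀ t ∈ Set.Ioc (0:ℝ) 1, A.op t y x = y

/-- `E^⊕ = { y ∈ [0,1] : y ⊳ 0 }`. -/
def UCA.E (A : UCA) : Set ℝ := {y ∈ Set.Icc (0:ℝ) 1 | A.Eats y 0}

/-- `V_{x,y} = inf { y ⊕_p x : p ∈ (0,1] }`. -/
noncomputable def UCA.V (A : UCA) (x y : ℝ) : ℝ :=
  sInf ((fun p => A.op p y x) '' Set.Ioc (0:ℝ) 1)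

/-!
For `b ≤ a` the curve `t ↦ a ⊕_t b` is monotone, since `(a ⊕_p b) ⊕_q b = a ⊕_{pq} b`, and it
is constantly `a` on `(0,1]` as soon as it takes the value `a` at one `t < 1`. By (UC) the
infimum `V_{w,a}` of such a curve eats `w`, and by (LC) `a ⊕_q w → a` as `q → 1⁻`; combining
the two, whenever `z ⊳ x` with `x < z`, some element of `(x, z]` eats `0`.

If `Γ = Γ_{x,y}` were constant on some `[p, q]`, then either `Γ q = x`, so `x ⊳ y` against (LC),
or `x < Γ q ⊳ x`. If `Γ` missed a value `c`, then with `p₀ = sup {p : Γ p ≤ c}`, (LC) gives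
`Γ p₀ < c ≤ inf_{q > p₀} Γ q = V_{Γ p₀, y}`, which eats `Γ p₀`. Either way `(x, y]` meets `E^⊕`.
-/

namespace UCA

variable (A : UCA) {a b c u w x y z p q r s t : ℝ}

theorem op_self (hp : p ∈ Icc (0:ℝ) 1) (hx : x ∈ Icc (0:ℝ) 1) : A.op p x x = x := by
  rcases hp.1.eq_or_lt with rfl | hp0
  · exact A.proj0 x hx x hx
  rcases hp.2.eq_or_lt with rfl | hp1
  · exact A.proj1 x hx x hx
  exact A.idem p ⟨hp0, hp1⟩ x hx

theorem op_eq_op_one_sub (hp : p ∈ Icc (0:ℝ) 1) (hx : x ∈ Icc (0:ℝ) 1) (hy : y ∈ Icc (0:ℝ) 1) :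
    A.op p x y = A.op (1 - p) y x := by
  rcases hp.1.eq_or_lt with rfl | hp0
  · rw [sub_zero, A.proj0 x hx y hy, A.proj1 y hy x hx]
  rcases hp.2.eq_or_lt with rfl | hp1
  · rw [sub_self, A.proj1 x hx y hy, A.proj0 y hy x hx]
  exact A.comm p ⟨hp0, hp1⟩ x hx y hy

theorem op_op_right (hp : p ∈ Icc (0:ℝ) 1) (hq : q ∈ Icc (0:ℝ) 1) (ha : a ∈ Icc (0:ℝ) 1)
    (hb : b ∈ Icc (0:ℝ) 1) : A.op q (A.op p a b) b = A.op (p * q) a b := by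
  rcases hq.1.eq_or_lt with rfl | hq0
  · rw [mul_zero, A.proj0 _ (A.mem p hp a ha b hb) b hb, A.proj0 a ha b hb]
  rcases hq.2.eq_or_lt with rfl | hq1
  · rw [mul_one, A.proj1 _ (A.mem p hp a ha b hb) b hb]
  rcases hp.1.eq_or_lt with rfl | hp0
  · rw [zero_mul, A.proj0 a ha b hb, A.op_self hq hb]
  rcases hp.2.eq_or_lt with rfl | hp1
  · rw [one_mul, A.proj1 a ha b hb]
  have hpq : p * q < 1 := by nlinarith
  have hr : (1 - p) * q / (1 - p * q) ∈ Ioo (0:ℝ) 1 := by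
    constructor
    · exact div_pos (mul_pos (by linarith) hq0) (by linarith)
    · rw [div_lt_one (by linarith)]
      nlinarith
  rw [A.assoc p ⟨hp0, hp1⟩ q ⟨hq0, hq1⟩ a ha b hb b hb, A.idem _ hr b hb]

theorem op_op_of_eats (hab : A.Eats a b) (hs : s ∈ Ioc (0:ℝ) 1) (hr : r ∈ Icc (0:ℝ) 1)
    (ha : a ∈ Icc (0:ℝ) 1) (hb : b ∈ Icc (0:ℝ) 1) (hw : w ∈ Icc (0:ℝ) 1) :
    A.op s a (A.op r b w) = A.op (s + r * (1 - s)) a w := by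
  rcases hs.2.eq_or_lt with rfl | hs1
  · rw [sub_self, mul_zero, add_zero, A.proj1 a ha _ (A.mem r hr b hb w hw), A.proj1 a ha w hw]
  rcases hr.1.eq_or_lt with rfl | hr0
  · rw [zero_mul, add_zero, A.proj0 b hb w hw]
  rcases hr.2.eq_or_lt with rfl | hr1
  · rw [one_mul, add_sub_cancel, A.proj1 b hb w hw, hab s hs, A.proj1 a ha w hw]
  set q := s + r * (1 - s)
  have hq : q ∈ Ioo (0:ℝ) 1 := ⟨by nlinarith [hs.1], by nlinarith⟩
  have hp : s / q ∈ Ioo (0:ℝ) 1 := ⟨div_pos hs.1 hq.1, (div_lt_one hq.1).2 (by nlinarith [hs.1])⟩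
  have hpq : s / q * q = s := div_mul_cancel₀ s hq.1.ne'
  have hr' : (1 - s / q) * q / (1 - s) = r := by
    rw [sub_mul, one_mul, hpq, show q - s = r * (1 - s) by ring,
      mul_div_assoc, div_self (by linarith), mul_one]
  have h := A.assoc (s / q) hp q hq a ha b hb w hw
  rwa [hab _ ⟨hp.1, hp.2.le⟩, hpq, hr', eq_comm] at h

theorem eats_self (ha : a ∈ Icc (0:ℝ) 1) : A.Eats a a :=
  fun _ ht => A.op_self (Ioc_subset_Icc_self ht) ha

theorem eats_trans (hab : A.Eats a b) (hbc : A.Eats b c) (ha : a ∈ Icc (0:ℝ) 1)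
    (hb : b ∈ Icc (0:ℝ) 1) (hc : c ∈ Icc (0:ℝ) 1) : A.Eats a c := by
  intro t ht
  have h2t : 0 < 2 - t := by linarith [ht.2]
  have hs : t / 2 ∈ Ioc (0:ℝ) 1 := ⟨by linarith [ht.1], by linarith [ht.2]⟩
  have hr : t / (2 - t) ∈ Ioc (0:ℝ) 1 :=
    ⟨div_pos ht.1 h2t, (div_le_one h2t).2 (by linarith [ht.2])⟩
  calc A.op t a c = A.op (t / 2 + t / (2 - t) * (1 - t / 2)) a c := by
        congr 1
        field_simp
        ring
    _ = A.op (t / 2) a (A.op (t / (2 - t)) b c) :=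
        (A.op_op_of_eats hab hs (Ioc_subset_Icc_self hr) ha hb hc).symm
    _ = a := by rw [hbc _ hr, hab _ hs]

theorem V_le_op (hs : s ∈ Ioc (0:ℝ) 1) (ha : a ∈ Icc (0:ℝ) 1) (hw : w ∈ Icc (0:ℝ) 1) :
    A.V w a ≤ A.op s a w :=
  csInf_le ⟨0, by rintro _ ⟨t, ht, rfl⟩; exact (A.mem t (Ioc_subset_Icc_self ht) a ha w hw).1⟩
    ⟨s, hs, rfl⟩

theorem V_le (ha : a ∈ Icc (0:ℝ) 1) (hw : w ∈ Icc (0:ℝ) 1) : A.V w a ≤ a :=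
  (A.V_le_op (right_mem_Ioc.2 zero_lt_one) ha hw).trans_eq (A.proj1 a ha w hw)

theorem le_V (h : ∀ s ∈ Ioc (0:ℝ) 1, c ≤ A.op s a w) : c ≤ A.V w a :=
  le_csInf ⟨_, 1, right_mem_Ioc.2 zero_lt_one, rfl⟩ (by rintro _ ⟨s, hs, rfl⟩; exact h s hs)

theorem le_V_op_of_eats (hab : A.Eats a b) (hr : r ∈ Ico (0:ℝ) 1) (ha : a ∈ Icc (0:ℝ) 1)
    (hb : b ∈ Icc (0:ℝ) 1) (hw : w ∈ Icc (0:ℝ) 1) (h : ∀ q ∈ Ioc r 1, c ≤ A.op q a w) :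
    c ≤ A.V (A.op r b w) a :=
  A.le_V fun s hs => by
    rw [A.op_op_of_eats hab hs (Ico_subset_Icc_self hr) ha hb hw]
    exact h _ ⟨by nlinarith [hs.1, hr.2], by nlinarith [mul_nonneg (sub_nonneg.2 hs.2) (sub_nonneg.2 hr.2.le)]⟩

section MO

variable (hMO : A.MO)
include hMO

theorem op_le_op_right (hp : p ∈ Ioo (0:ℝ) 1) (ha : a ∈ Icc (0:ℝ) 1) (hb : b ∈ Icc (0:ℝ) 1)
    (hc : c ∈ Icc (0:ℝ) 1) (hbc : b ≤ c) : A.op p a b ≤ A.op p a c := by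
  rw [A.comm p hp a ha b hb, A.comm p hp a ha c hc]
  exact hMO b hb c hc a ha (1 - p) ⟨by linarith [hp.2], by linarith [hp.1]⟩ hbc

theorem le_op (hp : p ∈ Icc (0:ℝ) 1) (ha : a ∈ Icc (0:ℝ) 1) (hb : b ∈ Icc (0:ℝ) 1)
    (hba : b ≤ a) : b ≤ A.op p a b := by
  rcases hp.1.eq_or_lt with rfl | hp0
  · rw [A.proj0 a ha b hb]
  rcases hp.2.eq_or_lt with rfl | hp1
  · rwa [A.proj1 a ha b hb]
  simpa only [A.idem p ⟨hp0, hp1⟩ b hb] using hMO b hb a ha b hb p ⟨hp0, hp1⟩ hba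

theorem op_le (hp : p ∈ Icc (0:ℝ) 1) (ha : a ∈ Icc (0:ℝ) 1) (hb : b ∈ Icc (0:ℝ) 1)
    (hba : b ≤ a) : A.op p a b ≤ a := by
  rcases hp.1.eq_or_lt with rfl | hp0
  · rwa [A.proj0 a ha b hb]
  rcases hp.2.eq_or_lt with rfl | hp1
  · rw [A.proj1 a ha b hb]
  simpa only [A.idem p ⟨hp0, hp1⟩ a ha] using A.op_le_op_right hMO ⟨hp0, hp1⟩ ha hb ha hba

theorem monotoneOn_op (ha : a ∈ Icc (0:ℝ) 1) (hb : b ∈ Icc (0:ℝ) 1) (hba : b ≤ a) :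
    MonotoneOn (fun t => A.op t a b) (Icc 0 1) := by
  intro t ht u hu htu
  rcases hu.1.eq_or_lt with rfl | hu0
  · rw [le_antisymm htu ht.1]
  have hr : t / u ∈ Icc (0:ℝ) 1 := ⟨div_nonneg ht.1 hu.1, (div_le_one hu0).2 htu⟩
  calc A.op t a b = A.op (t / u) (A.op u a b) b := by
        rw [A.op_op_right hu hr ha hb, mul_div_cancel₀ t hu0.ne']
    _ ≤ A.op u a b := A.op_le hMO hr (A.mem u hu a ha b hb) hb (A.le_op hMO hu ha hb hba)

theorem antitoneOn_op (ha : a ∈ Icc (0:ℝ) 1) (hb : b ∈ Icc (0:ℝ) 1) (hab : a ≤ b) :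
    AntitoneOn (fun t => A.op t a b) (Icc 0 1) := by
  intro t ht u hu htu
  show A.op u a b ≤ A.op t a b
  rw [A.op_eq_op_one_sub ht ha hb, A.op_eq_op_one_sub hu ha hb]
  exact A.monotoneOn_op hMO hb ha hab ⟨by linarith [hu.2], by linarith [hu.1]⟩
    ⟨by linarith [ht.2], by linarith [ht.1]⟩ (by linarith)

theorem eats_of_op_eq (ha : a ∈ Icc (0:ℝ) 1) (hb : b ∈ Icc (0:ℝ) 1) (hr : r ∈ Ioo (0:ℝ) 1)
    (h : A.op r a b = a) : A.Eats a b := by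
  have hrI : r ∈ Icc (0:ℝ) 1 := Ioo_subset_Icc_self hr
  have hpowI : ∀ n : ℕ, r ^ n ∈ Icc (0:ℝ) 1 := fun n => ⟨pow_nonneg hr.1.le n, pow_le_one₀ hr.1.le hr.2.le⟩
  have hpow : ∀ n : ℕ, A.op (r ^ n) a b = a := by
    intro n
    induction n with
    | zero => rw [pow_zero, A.proj1 a ha b hb]
    | succ n ih => rw [pow_succ, ← A.op_op_right (hpowI n) hrI ha hb, ih, h]
  intro t ht
  obtain ⟨n, hn⟩ := exists_pow_lt_of_lt_one ht.1 hr.2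
  have htI : t ∈ Icc (0:ℝ) 1 := Ioc_subset_Icc_self ht
  have h1 : (1:ℝ) ∈ Icc (0:ℝ) 1 := right_mem_Icc.2 zero_le_one
  -- `a ⊕_t b` lies between `a ⊕_{r^n} b = a` and `a ⊕_1 b = a`
  rcases le_total b a with hba | hab
  · have hmono := A.monotoneOn_op hMO ha hb hba
    exact le_antisymm ((hmono htI h1 ht.2).trans_eq (A.proj1 a ha b hb))
      ((hpow n).symm.trans_le (hmono (hpowI n) htI hn.le))
  · have hanti := A.antitoneOn_op hMO ha hb hab
    exact le_antisymm ((hanti (hpowI n) htI hn.le).trans_eq (hpow n))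
      ((A.proj1 a ha b hb).symm.trans_le (hanti htI h1 ht.2))

theorem op_lt_of_not_eats (ha : a ∈ Icc (0:ℝ) 1) (hb : b ∈ Icc (0:ℝ) 1) (hba : b ≤ a)
    (h : ¬ A.Eats a b) (hq : q ∈ Ioo (0:ℝ) 1) : A.op q a b < a :=
  (A.op_le hMO (Ioo_subset_Icc_self hq) ha hb hba).lt_of_ne
    fun heq => h (A.eats_of_op_eq hMO ha hb hq heq)

theorem eats_of_eats_of_mem_Icc (h : A.Eats a b) (ha : a ∈ Icc (0:ℝ) 1) (hb : b ∈ Icc (0:ℝ) 1)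
    (hc : c ∈ Icc b a) : A.Eats a c := by
  have hcI : c ∈ Icc (0:ℝ) 1 := ⟨hb.1.trans hc.1, hc.2.trans ha.2⟩
  intro t ht
  rcases ht.2.eq_or_lt with rfl | ht1
  · exact A.proj1 a ha c hcI
  exact le_antisymm (A.op_le hMO (Ioc_subset_Icc_self ht) ha hcI hc.2)
    ((h t ht).symm.trans_le (A.op_le_op_right hMO ⟨ht.1, ht1⟩ ha hb hcI hc.1))

end MO

theorem le_op_of_eventually_le (hUC : A.UC) (hx : x ∈ Ico (0:ℝ) 1) (hy : y ∈ Ico (0:ℝ) 1)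
    (hp : p ∈ Ioo (0:ℝ) 1) (h : ∀ᶠ ε in 𝓝[>] (0:ℝ), c ≤ A.op p (x + ε) (y + ε)) :
    c ≤ A.op p x y := by
  refine (le_limsup_of_frequently_le h.frequently ⟨1, eventually_map.2 ?_⟩).trans
    (hUC x hx y hy p hp)
  filter_upwards [Ioo_mem_nhdsGT (show (0:ℝ) < 1 - max x y by simp [hx.2, hy.2])] with ε hε
  have := le_max_left x y
  have := le_max_right x y
  exact (A.mem p (Ioo_subset_Icc_self hp) (x + ε) ⟨by linarith [hx.1, hε.1], by linarith [hε.2]⟩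
    (y + ε) ⟨by linarith [hy.1, hε.1], by linarith [hε.2]⟩).2

theorem eats_sInf (hMO : A.MO) (hUC : A.UC) {S : Set ℝ} (ha1 : a < 1) (hS : S.Nonempty)
    (hSa : S ⊆ Icc 0 a) (hSe : ∀ u ∈ S, A.Eats a u) : A.Eats a (sInf S) := by
  obtain ⟨u₀, hu₀⟩ := hS
  have ha : a ∈ Icc (0:ℝ) 1 := ⟨(hSa hu₀).1.trans (hSa hu₀).2, ha1.le⟩
  have hβ : sInf S ∈ Icc 0 a := ⟨le_csInf ⟨u₀, hu₀⟩ fun u hu => (hSa hu).1,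
    (csInf_le ⟨0, fun u hu => (hSa hu).1⟩ hu₀).trans (hSa hu₀).2⟩
  set β := sInf S
  have hβI : β ∈ Icc (0:ℝ) 1 := ⟨hβ.1, hβ.2.trans ha.2⟩
  intro t ht
  rcases ht.2.eq_or_lt with rfl | ht1
  · exact A.proj1 a ha β hβI
  have ht' : 1 - t ∈ Ioo (0:ℝ) 1 := ⟨by linarith, by linarith [ht.1]⟩
  refine le_antisymm (A.op_le hMO (Ioc_subset_Icc_self ht) ha hβI hβ.2) ?_
  rw [A.comm t ⟨ht.1, ht1⟩ a ha β hβI]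
  refine A.le_op_of_eventually_le hUC ⟨hβ.1, hβ.2.trans_lt ha1⟩ ⟨ha.1, ha1⟩ ht' ?_
  filter_upwards [Ioo_mem_nhdsGT (sub_pos.2 ha1)] with ε hε
  obtain ⟨u, hu, huβ⟩ := exists_lt_of_csInf_lt ⟨u₀, hu₀⟩ (lt_add_of_pos_right β hε.1)
  have huI : u ∈ Icc (0:ℝ) 1 := ⟨(hSa hu).1, (hSa hu).2.trans ha.2⟩
  have haε : a + ε ∈ Icc (0:ℝ) 1 := ⟨by linarith [ha.1, hε.1], by linarith [hε.2]⟩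
  have hβε : β + ε ∈ Icc (0:ℝ) 1 := ⟨by linarith [hβ.1, hε.1], by linarith [hβ.2, hε.2]⟩
  calc a = A.op (1 - t) u a := by rw [← A.comm t ⟨ht.1, ht1⟩ a ha u huI, hSe u hu t ht]
    _ ≤ A.op (1 - t) u (a + ε) := A.op_le_op_right hMO ht' huI ha haε (by linarith [hε.1])
    _ ≤ A.op (1 - t) (β + ε) (a + ε) := hMO u huI _ hβε _ haε _ ht' huβ.le

theorem eats_V (hMO : A.MO) (hUC : A.UC) (ha : a ∈ Icc (0:ℝ) 1) (hw : w ∈ Icc (0:ℝ) 1)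
    (hwa : w ≤ a) : A.Eats (A.V w a) w := by
  have hwV : w ≤ A.V w a := A.le_V fun s hs => A.le_op hMO (Ioc_subset_Icc_self hs) ha hw hwa
  have hVa : A.V w a ≤ a := A.V_le ha hw
  set V := A.V w a
  have hVI : V ∈ Icc (0:ℝ) 1 := ⟨hw.1.trans hwV, hVa.trans ha.2⟩
  intro t ht
  rcases ht.2.eq_or_lt with rfl | ht1
  · exact A.proj1 V hVI w hw
  have htI : t ∈ Ioo (0:ℝ) 1 := ⟨ht.1, ht1⟩
  refine le_antisymm (A.op_le hMO (Ioc_subset_Icc_self ht) hVI hw hwV) ?_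
  rcases hVa.eq_or_lt with hVa | hVa
  · exact (A.V_le_op ht ha hw).trans_eq (by rw [hVa])
  have hV1 : V < 1 := hVa.trans_le ha.2
  refine A.le_op_of_eventually_le hUC ⟨hVI.1, hV1⟩ ⟨hw.1, hwV.trans_lt hV1⟩ htI ?_
  filter_upwards [Ioo_mem_nhdsGT (sub_pos.2 hV1)] with ε hε
  obtain ⟨_, ⟨s, hs, rfl⟩, hsV⟩ :=
    exists_lt_of_csInf_lt (s := (fun p => A.op p a w) '' Ioc 0 1)
      ⟨_, 1, right_mem_Ioc.2 zero_lt_one, rfl⟩ (lt_add_of_pos_right V hε.1)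
  have hsI : s ∈ Icc (0:ℝ) 1 := Ioc_subset_Icc_self hs
  have hm : A.op s a w ∈ Icc (0:ℝ) 1 := A.mem s hsI a ha w hw
  have hwε : w + ε ∈ Icc (0:ℝ) 1 := ⟨by linarith [hw.1, hε.1], by linarith [hε.2]⟩
  have hVε : V + ε ∈ Icc (0:ℝ) 1 := ⟨by linarith [hVI.1, hε.1], by linarith [hε.2]⟩
  calc V ≤ A.op (s * t) a w :=
        A.V_le_op ⟨mul_pos hs.1 ht.1, mul_le_one₀ hs.2 ht.1.le ht.2⟩ ha hw
    _ = A.op t (A.op s a w) w := (A.op_op_right hsI (Ioc_subset_Icc_self ht) ha hw).symm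
    _ ≤ A.op t (A.op s a w) (w + ε) := A.op_le_op_right hMO htI hm hw hwε (by linarith [hε.1])
    _ ≤ A.op t (V + ε) (w + ε) := hMO _ hm _ hVε _ hwε t htI hsV.le

theorem exists_forall_lt_op (hLC : A.LC) (ha : a ∈ Icc (0:ℝ) 1) (hw : w ∈ Icc (0:ℝ) 1)
    (hwa : w ≤ a) (hca : c < a) : ∃ r ∈ Ioo (0:ℝ) 1, ∀ q ∈ Ioc r 1, c < A.op q a w := by
  have hIoo : ∀ᶠ q in 𝓝[<] (1:ℝ), q ∈ Ioo (0:ℝ) 1 := Ioo_mem_nhdsLT zero_lt_one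
  have hev : ∀ᶠ q in 𝓝[<] (1:ℝ), c < A.op q a w :=
    eventually_lt_of_lt_liminf (hca.trans_le (hLC w hw a ha hwa))
      ⟨0, eventually_map.2 (hIoo.mono fun q hq => (A.mem q (Ioo_subset_Icc_self hq) a ha w hw).1)⟩
  obtain ⟨l, hl, hsub⟩ := mem_nhdsLT_iff_exists_Ioo_subset.1 (hev.and hIoo)
  refine ⟨max l (1 / 2), ⟨by positivity, max_lt hl (by norm_num)⟩, fun q hq => ?_⟩
  rcases hq.2.eq_or_lt with rfl | hq1
  · rwa [A.proj1 a ha w hw]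
  exact (hsub ⟨(le_max_left _ _).trans_lt hq.1, hq1⟩).1

theorem le_of_forall_op_le (hLC : A.LC) (ha : a ∈ Icc (0:ℝ) 1) (hw : w ∈ Icc (0:ℝ) 1)
    (hwa : w ≤ a) (h : ∀ t ∈ Ioo (0:ℝ) 1, A.op t a w ≤ c) : a ≤ c := by
  by_contra! hca
  obtain ⟨r, hr, hlt⟩ := A.exists_forall_lt_op hLC ha hw hwa hca
  have hq : (r + 1) / 2 ∈ Ioo r 1 := ⟨by linarith [hr.2], by linarith [hr.2]⟩
  exact (hlt _ ⟨hq.1, hq.2.le⟩).not_ge (h _ ⟨hr.1.trans hq.1, hq.2⟩)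

section Eats

variable (hMO : A.MO) (hUC : A.UC) (hLC : A.LC)
include hMO hUC hLC

theorem eats_of_eats_of_le (hw0 : 0 ≤ w) (hwx : w ≤ x) (hxa : x < a) (ha1 : a < 1)
    (h : A.Eats a x) : A.Eats a w := by
  have ha : a ∈ Icc (0:ℝ) 1 := ⟨by linarith, ha1.le⟩
  have hw : w ∈ Icc (0:ℝ) 1 := ⟨hw0, by linarith⟩
  set X := {u | u ∈ Icc w x ∧ A.Eats a u}
  have hxX : x ∈ X := ⟨⟨hwx, le_rfl⟩, h⟩
  have hXbdd : BddBelow X := ⟨w, fun u hu => hu.1.1⟩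
  have hβ : sInf X ∈ Icc w x := ⟨le_csInf ⟨x, hxX⟩ fun u hu => hu.1.1, csInf_le hXbdd hxX⟩
  set β := sInf X
  have hβI : β ∈ Icc (0:ℝ) 1 := ⟨hw0.trans hβ.1, by linarith [hβ.2]⟩
  have haβ : A.Eats a β := A.eats_sInf hMO hUC ha1 ⟨x, hxX⟩
    (fun u hu => ⟨hw0.trans hu.1.1, hu.1.2.trans hxa.le⟩) fun u hu => hu.2
  by_contra haw
  -- Then `u := β ⊕_r w < β`, yet `a` eats `u` through `V_{u,a} ≥ x`: against minimality of `β`.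
  have hβw : ¬ A.Eats β w := fun hβw => haw (A.eats_trans haβ hβw ha hβI hw)
  obtain ⟨r, hr, hlt⟩ := A.exists_forall_lt_op hLC ha hw (by linarith) hxa
  have hrI : r ∈ Icc (0:ℝ) 1 := Ioo_subset_Icc_self hr
  set u := A.op r β w
  have hwu : w ≤ u := A.le_op hMO hrI hβI hw hβ.1
  have huβ : u < β := A.op_lt_of_not_eats hMO hβI hw hβ.1 hβw hr
  have huI : u ∈ Icc (0:ℝ) 1 := ⟨hw0.trans hwu, by linarith [hβI.2]⟩
  have hxG : x ≤ A.V u a :=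
    A.le_V_op_of_eats haβ (Ioo_subset_Ico_self hr) ha hβI hw fun q hq => (hlt q hq).le
  have hGa : A.V u a ≤ a := A.V_le ha huI
  have hGI : A.V u a ∈ Icc (0:ℝ) 1 := ⟨by linarith [hw0], hGa.trans ha.2⟩
  have haG : A.Eats a (A.V u a) :=
    A.eats_of_eats_of_mem_Icc hMO h ha ⟨by linarith, by linarith⟩ ⟨hxG, hGa⟩
  have hau : A.Eats a u :=
    A.eats_trans haG (A.eats_V hMO hUC ha huI (by linarith [hβ.2])) ha hGI huI
  exact huβ.not_ge (csInf_le hXbdd ⟨⟨hwu, by linarith [hβ.2]⟩, hau⟩)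

theorem exists_mem_Ioc_E_of_eats (hx : x ∈ Icc (0:ℝ) 1) (hz : z ∈ Icc (0:ℝ) 1) (hxz : x < z)
    (h : A.Eats z x) : ∃ e ∈ Ioc x z, e ∈ A.E := by
  have h0 : (0:ℝ) ∈ Icc (0:ℝ) 1 := left_mem_Icc.2 zero_le_one
  by_cases hz0 : A.Eats z 0
  · exact ⟨z, ⟨hxz, le_rfl⟩, hz, hz0⟩
  -- `G := V_{u,z}` with `u := x ⊕_r 0` eats `u`, hence `0`; the choice of `r` keeps `G > x`.
  obtain ⟨r, hr, hlt⟩ := A.exists_forall_lt_op hLC hz h0 hz.1 (by linarith : (x + z) / 2 < z)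
  have hrI : r ∈ Icc (0:ℝ) 1 := Ioo_subset_Icc_self hr
  set u := A.op r x 0
  have hux : u ≤ x := A.op_le hMO hrI hx h0 hx.1
  have huI : u ∈ Icc (0:ℝ) 1 := A.mem r hrI x hx 0 h0
  have hxG : (x + z) / 2 ≤ A.V u z :=
    A.le_V_op_of_eats h (Ioo_subset_Ico_self hr) hz hx h0 fun q hq => (hlt q hq).le
  have hhalf : (1 / 2 : ℝ) ∈ Ioc (0:ℝ) 1 := ⟨by norm_num, by norm_num⟩
  have hG1 : A.V u z < 1 :=
    calc A.V u z ≤ A.op (1 / 2) z u := A.V_le_op hhalf hz huI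
      _ = A.op (1 / 2 + r * (1 - 1 / 2)) z 0 := A.op_op_of_eats h hhalf hrI hz hx h0
      _ < z := A.op_lt_of_not_eats hMO hz h0 hz.1 hz0 ⟨by linarith [hr.1], by linarith [hr.2]⟩
      _ ≤ 1 := hz.2
  have hG0 : A.Eats (A.V u z) 0 := A.eats_of_eats_of_le hMO hUC hLC le_rfl huI.1
    (by linarith) hG1 (A.eats_V hMO hUC hz huI (by linarith))
  exact ⟨A.V u z, ⟨by linarith, A.V_le hz huI⟩, ⟨by linarith [hx.1], hG1.le⟩, hG0⟩

theorem not_eats_of_inter_E_eq_empty (hx : x ∈ Icc (0:ℝ) 1) (hE : Ioc x y ∩ A.E = ∅)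
    (hxu : x ≤ u) (huz : u < z) (hzy : z ≤ y) (hz : z ∈ Icc (0:ℝ) 1) : ¬ A.Eats z u := by
  intro h
  obtain ⟨e, he, heE⟩ := A.exists_mem_Ioc_E_of_eats hMO hUC hLC
    ⟨hx.1.trans hxu, by linarith [hz.2]⟩ hz huz h
  exact (eq_empty_iff_forall_notMem.1 hE) e ⟨⟨by linarith [he.1], he.2.trans hzy⟩, heE⟩

theorem strictMonoOn_op (hx : x ∈ Icc (0:ℝ) 1) (hy : y ∈ Icc (0:ℝ) 1) (hxy : x < y)
    (hE : Ioc x y ∩ A.E = ∅) : StrictMonoOn (fun t => A.op t y x) (Icc 0 1) := by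
  intro p hp q hq hpq
  refine (A.monotoneOn_op hMO hy hx hxy.le hp hq hpq.le).lt_of_ne fun heq => ?_
  have heq : A.op p y x = A.op q y x := heq
  have hq0 : 0 < q := hp.1.trans_lt hpq
  rcases (A.le_op hMO hq hy hx hxy.le).eq_or_lt with hxq | hxq
  · -- `y ⊕_q x = x` makes `x` eat `y`, so `y ⊕_t x = x` for all `t < 1`, against (LC).
    have hq1 : q < 1 := hq.2.lt_of_ne (by rintro rfl; rw [A.proj1 y hy x hx] at hxq; linarith)
    have hxy' : A.Eats x y := A.eats_of_op_eq hMO hx hy ⟨by linarith, by linarith⟩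
      ((A.op_eq_op_one_sub hq hy hx).symm.trans hxq.symm)
    refine hxy.not_ge (A.le_of_forall_op_le hLC hy hx hxy.le fun t ht => ?_)
    rw [A.op_eq_op_one_sub (Ioo_subset_Icc_self ht) hy hx,
      hxy' _ ⟨by linarith [ht.2], by linarith [ht.1]⟩]
  · have hp0 : 0 < p := hp.1.lt_of_ne (by rintro rfl; rw [A.proj0 y hy x hx] at heq; linarith)
    have hr : p / q ∈ Ioo (0:ℝ) 1 := ⟨div_pos hp0 hq0, (div_lt_one hq0).2 hpq⟩
    refine A.not_eats_of_inter_E_eq_empty hMO hUC hLC hx hE le_rfl hxq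
      (A.op_le hMO hq hy hx hxy.le) (A.mem q hq y hy x hx)
      (A.eats_of_op_eq hMO (A.mem q hq y hy x hx) hx hr ?_)
    rw [A.op_op_right hq (Ioo_subset_Icc_self hr) hy hx, mul_div_cancel₀ p hq0.ne', heq]

theorem surjOn_op (hx : x ∈ Icc (0:ℝ) 1) (hy : y ∈ Icc (0:ℝ) 1) (hxy : x ≤ y)
    (hE : Ioc x y ∩ A.E = ∅) : SurjOn (fun t => A.op t y x) (Icc 0 1) (Icc x y) := by
  intro c hc
  by_contra hcΓ
  set P := {p ∈ Icc (0:ℝ) 1 | A.op p y x ≤ c}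
  have h0P : (0:ℝ) ∈ P := ⟨left_mem_Icc.2 zero_le_one, (A.proj0 y hy x hx).trans_le hc.1⟩
  have hPbdd : BddAbove P := ⟨1, fun p hp => hp.1.2⟩
  have hp₀ : sSup P ∈ Icc (0:ℝ) 1 := ⟨le_csSup hPbdd h0P, csSup_le ⟨0, h0P⟩ fun p hp => hp.1.2⟩
  set p₀ := sSup P
  have hmono := A.monotoneOn_op hMO hy hx hxy
  have hΓp₀ : A.op p₀ y x ∈ Icc (0:ℝ) 1 := A.mem p₀ hp₀ y hy x hx
  have hxΓ : x ≤ A.op p₀ y x := A.le_op hMO hp₀ hy hx hxy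
  have hΓc : A.op p₀ y x < c := by
    refine lt_of_le_of_ne ?_ fun heq => hcΓ ⟨p₀, hp₀, heq⟩
    refine A.le_of_forall_op_le hLC hΓp₀ hx hxΓ fun t ht => ?_
    have htI : t ∈ Icc (0:ℝ) 1 := Ioo_subset_Icc_self ht
    rw [A.op_op_right hp₀ htI hy hx]
    rcases hp₀.1.eq_or_lt with h0 | h0
    · rw [← h0, zero_mul]
      exact h0P.2
    obtain ⟨p, hp, hpt⟩ := exists_lt_of_lt_csSup ⟨0, h0P⟩ (mul_lt_of_lt_one_right h0 ht.2)
    exact (hmono ⟨mul_nonneg hp₀.1 htI.1, mul_le_one₀ hp₀.2 htI.1 htI.2⟩ hp.1 hpt.le).trans hp.2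
  have hp₀1 : p₀ < 1 :=
    hp₀.2.lt_of_ne (by rintro h1; rw [h1, A.proj1 y hy x hx] at hΓc; linarith [hc.2])
  have hcW : c ≤ A.V (A.op p₀ y x) y :=
    A.le_V_op_of_eats (A.eats_self hy) ⟨hp₀.1, hp₀1⟩ hy hy hx fun q hq =>
      le_of_not_ge fun hqc => hq.1.not_ge (le_csSup hPbdd ⟨⟨hp₀.1.trans hq.1.le, hq.2⟩, hqc⟩)
  have hWy : A.V (A.op p₀ y x) y ≤ y := A.V_le hy hΓp₀
  exact A.not_eats_of_inter_E_eq_empty hMO hUC hLC hx hE hxΓ (hΓc.trans_le hcW) hWy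
    ⟨by linarith [hx.1], hWy.trans hy.2⟩
    (A.eats_V hMO hUC hy hΓp₀ (A.op_le hMO hp₀ hy hx hxy))

end Eats

end UCA

/-- Proposition 3.3(ii): for a convex algebra on `[0,1]` satisfying (MO), (UC), (LC),
for all `x < y` in `[0,1]` with `(x,y] ∩ E^⊕ = ∅`, the map `Γ_{x,y} : t ↦ y ⊕_t x`
is a strictly increasing bijection of `[0,1]` onto `[x,y]`. -/
theorem stmt_12 (A : UCA) (hMO : A.MO) (hUC : A.UC) (hLC : A.LC) :
    ∀ x ∈ Set.Icc (0:ℝ) 1, ∀ y ∈ Set.Icc (0:ℝ) 1, x < y →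
      Set.Ioc x y ∩ A.E = ∅ →
      StrictMonoOn (fun t => A.op t y x) (Set.Icc (0:ℝ) 1) ∧
      Set.BijOn (fun t => A.op t y x) (Set.Icc (0:ℝ) 1) (Set.Icc x y) := by
  intro x hx y hy hxy hE
  have hΓ := A.strictMonoOn_op hMO hUC hLC hx hy hxy hE
  exact ⟨hΓ, fun t ht => ⟨A.le_op hMO ht hy hx hxy.le, A.op_le hMO ht hy hx hxy.le⟩, hΓ.injOn,
    A.surjOn_op hMO hUC hLC hx hy hxy.le hE⟩
end

section
/- Let ⟨X, ⊕_p⟩ be a convex algebra, let x_1, …, x_n ∈ X and p_1, …, p_n ≥ 0 with Σ_{i=1}^n p_i = 1, and let j ∈ {1,…,n} be such that p_j > 0. Define y_i := x_j if x_j eats x_i, and y_i := x_i otherwise. Then the n-ary convex combinations agree: ⊕_{i=1}^n p_i x_i = ⊕_{i=1}^n p_i y_i. -/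
open Set Filter Topology

/-- A convex algebra on a set `X`: `op p x y` denotes `x ⊕_p y`, for `p ∈ (0,1)`,
extended to `p ∈ [0,1]` by the projection axioms `x ⊕_1 y = x` and `x ⊕_0 y = y`. -/
structure ConvexAlg (X : Type*) where
  op : ℝ → X → X → X
  idem : ∀ p ∈ Set.Ioo (0:ℝ) 1, ∀ x : X, op p x x = x
  comm : ∀ p ∈ Set.Ioo (0:ℝ) 1, ∀ x y : X, op p x y = op (1 - p) y x
  assoc : ∀ p ∈ Set.Ioo (0:ℝ) 1, ∀ q ∈ Set.Ioo (0:ℝ) 1, ∀ x y z : X,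
      op q (op p x y) z = op (p * q) x (op ((1 - p) * q / (1 - p * q)) y z)
  proj1 : ∀ x y : X, op 1 x y = x
  proj0 : ∀ x y : X, op 0 x y = y

/-- `y ⊳ x` : `y` eats `x`, i.e. `y ⊕_t x = y` for all `t ∈ (0,1]`. -/
def ConvexAlg.Eats {X : Type*} (A : ConvexAlg X) (y x : X) : Prop :=
  ∀ t ∈ Set.Ioc (0:ℝ) 1, A.op t y x = y

/-- The `n`-ary convex combination `⊕_{i=1}^n p_i x_i`, defined inductively from the
binary operations: it equals `x_1` when `p_1 = 1`, and
`x_1 ⊕_{p_1} (⊕_{i=2}^n (p_i/(1-p_1)) x_i)` when `p_1 < 1`. -/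
noncomputable def ConvexAlg.mixVec {X : Type*} (A : ConvexAlg X) :
    (n : ℕ) → (Fin (n + 1) → ℝ) → (Fin (n + 1) → X) → X
  | 0, _, x => x 0
  | n + 1, p, x =>
      if p 0 = 1 then x 0
      else A.op (p 0) (x 0)
        (A.mixVec n (fun i => p i.succ / (1 - p 0)) (fun i => x i.succ))

/-! Induction along the recursive definition, writing `⊕ pᵢ xᵢ = x₁ ⊕_{p₁} m` with `m` the
combination of the tail. The derived law `a ⊕_p (b ⊕_q z) = b ⊕_{q(1-p)} (a ⊕_{p'} z)` lets an
outer element be slid past the tail's head into the tail. Hence, if `x_j = x₁`, it can be moved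
next to every tail element it eats and absorb it there; and if `x_j` lies in the tail, the tail is
handled by induction, while a head `x₁` eaten by `x_j` may be replaced by `x_j`, because
`x₁ ⊕_p m` can be slid down to `x_j`, where `x₁ ⊕ x_j = x_j ⊕ x_j`. -/

lemma eq_of_mem_stdSimplex_of_eq_one {ι : Type*} [Fintype ι] {q : ι → ℝ}
    (hq : q ∈ stdSimplex ℝ ι) {i k : ι} (hi : q i = 1) (hk : 0 < q k) : k = i := by
  classical
  by_contra hki
  have := Finset.single_le_sum (fun l _ => hq.1 l) (Finset.mem_erase.2 ⟨hki, Finset.mem_univ k⟩)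
  linarith [hq.2, Finset.add_sum_erase _ q (Finset.mem_univ i)]

lemma mem_Ico_of_mem_stdSimplex_of_ne_one {ι : Type*} [Fintype ι] {q : ι → ℝ}
    (hq : q ∈ stdSimplex ℝ ι) {i : ι} (hi : q i ≠ 1) : q i ∈ Ico (0:ℝ) 1 :=
  ⟨hq.1 i, (mem_Icc_of_mem_stdSimplex hq i).2.lt_of_ne hi⟩

lemma tail_mem_stdSimplex {n : ℕ} {q : Fin (n + 2) → ℝ} (hq : q ∈ stdSimplex ℝ (Fin (n + 2)))
    (h0 : q 0 < 1) : (fun i : Fin (n + 1) => q i.succ / (1 - q 0)) ∈ stdSimplex ℝ (Fin (n + 1)) := by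
  have hpos : 0 < 1 - q 0 := by linarith
  refine ⟨fun i => div_nonneg (hq.1 _) hpos.le, ?_⟩
  have hs := hq.2
  rw [Fin.sum_univ_succ] at hs
  rw [← Finset.sum_div, div_eq_one_iff_eq hpos.ne']
  linarith

section Weights

variable {p q : ℝ}

lemma add_sub_mul_mem_Ioo (hp : p ∈ Ioo (0:ℝ) 1) (hq : q ∈ Ioo (0:ℝ) 1) :
    p + q - p * q ∈ Ioo (0:ℝ) 1 := by
  obtain ⟨hp0, hp1⟩ := hp
  obtain ⟨hq0, hq1⟩ := hq
  constructor <;> nlinarith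

lemma div_add_sub_mul_mem_Ioo (hp : p ∈ Ioo (0:ℝ) 1) (hq : q ∈ Ioo (0:ℝ) 1) :
    p / (p + q - p * q) ∈ Ioo (0:ℝ) 1 := by
  have hr := (add_sub_mul_mem_Ioo hp hq).1
  obtain ⟨hp0, hp1⟩ := hp
  obtain ⟨hq0, hq1⟩ := hq
  exact ⟨div_pos hp0 hr, (div_lt_one hr).2 (by nlinarith)⟩

lemma div_one_sub_mul_one_sub_mem_Ioo (hp : p ∈ Ioo (0:ℝ) 1) (hq : q ∈ Ico (0:ℝ) 1) :
    p / (1 - q * (1 - p)) ∈ Ioo (0:ℝ) 1 := by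
  obtain ⟨hp0, hp1⟩ := hp
  obtain ⟨hq0, hq1⟩ := hq
  have hd : 0 < 1 - q * (1 - p) := by nlinarith
  exact ⟨div_pos hp0 hd, (div_lt_one hd).2 (by nlinarith)⟩

end Weights

namespace ConvexAlg

variable {X : Type*} (A : ConvexAlg X) {p q : ℝ}

lemma op_self (hp : p ∈ Icc (0:ℝ) 1) (x : X) : A.op p x x = x := by
  rcases hp.1.eq_or_lt with rfl | hp0
  · exact A.proj0 x x
  rcases hp.2.eq_or_lt with rfl | hp1
  · exact A.proj1 x x
  exact A.idem p ⟨hp0, hp1⟩ x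

lemma op_eq_right_of_eats {a b : X} (h : A.Eats b a) (hp : p ∈ Ico (0:ℝ) 1) :
    A.op p a b = b := by
  rcases hp.1.eq_or_lt with rfl | hp0
  · exact A.proj0 a b
  rw [A.comm p ⟨hp0, hp.2⟩]
  exact h _ ⟨by linarith [hp.2], by linarith⟩

lemma op_assoc_symm (hp : p ∈ Ioo (0:ℝ) 1) (hq : q ∈ Ioo (0:ℝ) 1) (x y z : X) :
    A.op p x (A.op q y z) = A.op (p + q - p * q) (A.op (p / (p + q - p * q)) x y) z := by
  have hr := add_sub_mul_mem_Ioo hp hq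
  rw [A.assoc _ (div_add_sub_mul_mem_Ioo hp hq) _ hr]
  have h1 : p / (p + q - p * q) * (p + q - p * q) = p := div_mul_cancel₀ _ hr.1.ne'
  have h2 : (1 - p / (p + q - p * q)) * (p + q - p * q) / (1 - p) = q := by
    have := hr.1.ne'
    rw [div_eq_iff (by linarith [hp.2])]
    field_simp
    ring
  rw [h1, h2]

lemma op_left_comm (hp : p ∈ Ioo (0:ℝ) 1) (hq : q ∈ Ico (0:ℝ) 1) (x y z : X) :
    A.op p x (A.op q y z) = A.op (q * (1 - p)) y (A.op (p / (1 - q * (1 - p))) x z) := by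
  rcases hq.1.eq_or_lt with rfl | hq0
  · simp only [A.proj0, zero_mul, sub_zero, div_one]
  replace hq : q ∈ Ioo (0:ℝ) 1 := ⟨hq0, hq.2⟩
  have hr := add_sub_mul_mem_Ioo hp hq
  have hs := div_add_sub_mul_mem_Ioo hp hq
  rw [A.op_assoc_symm hp hq, A.comm _ hs, A.assoc _ ⟨by linarith [hs.2], by linarith [hs.1]⟩ _ hr]
  have hne : p + q - p * q ≠ 0 := hr.1.ne'
  have h1 : (1 - p / (p + q - p * q)) * (p + q - p * q) = q * (1 - p) := by
    field_simp
    ring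
  have h2 : (1 - (1 - p / (p + q - p * q))) * (p + q - p * q) = p := by
    field_simp
    ring
  rw [h1, h2]

lemma op_op_eq_of_eats {x y : X} (h : A.Eats x y) (hp : p ∈ Ioo (0:ℝ) 1)
    (hq : q ∈ Ico (0:ℝ) 1) (z : X) : A.op p x (A.op q y z) = A.op p x (A.op q x z) := by
  rcases hq.1.eq_or_lt with rfl | hq0
  · simp only [A.proj0]
  have hs := div_add_sub_mul_mem_Ioo hp ⟨hq0, hq.2⟩
  rw [A.op_assoc_symm hp ⟨hq0, hq.2⟩, A.op_assoc_symm hp ⟨hq0, hq.2⟩, h _ (Ioo_subset_Ioc_self hs),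
    A.op_self (Ioo_subset_Icc_self hs)]

lemma op_eq_op_of_eq_or_eats {a b b' : X} (h : b' = b ∨ A.Eats a b ∧ b' = a)
    (hp : p ∈ Ioo (0:ℝ) 1) : A.op p a b = A.op p a b' := by
  rcases h with rfl | ⟨he, rfl⟩
  · rfl
  rw [he p (Ioo_subset_Ioc_self hp), A.op_self (Ioo_subset_Icc_self hp)]

lemma op_mixVec_eq_of_eq_or_eats {a : X} {n : ℕ} {s : ℝ} {p : Fin (n + 1) → ℝ}
    {w w' : Fin (n + 1) → X} (hs : s ∈ Ioo (0:ℝ) 1) (hp : p ∈ stdSimplex ℝ (Fin (n + 1)))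
    (hw : ∀ i, w' i = w i ∨ A.Eats a (w i) ∧ w' i = a) :
    A.op s a (A.mixVec n p w) = A.op s a (A.mixVec n p w') := by
  induction n generalizing s with
  | zero => exact A.op_eq_op_of_eq_or_eats (hw 0) hs
  | succ n ih =>
    by_cases h1 : p 0 = 1
    · simp only [mixVec, if_pos h1]
      exact A.op_eq_op_of_eq_or_eats (hw 0) hs
    have h0 := mem_Ico_of_mem_stdSimplex_of_ne_one hp h1
    simp only [mixVec, if_neg h1]
    have head : ∀ z, A.op s a (A.op (p 0) (w' 0) z) = A.op s a (A.op (p 0) (w 0) z) := by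
      rcases hw 0 with h | ⟨he, h⟩ <;> intro z <;> rw [h]
      exact (A.op_op_eq_of_eats he hs h0 z).symm
    rw [head, A.op_left_comm hs h0, A.op_left_comm hs h0,
      ih (div_one_sub_mul_one_sub_mem_Ioo hs h0) (tail_mem_stdSimplex hp h0.2) fun i => hw i.succ]

lemma op_mixVec_eq_of_eats {a : X} {n : ℕ} {s : ℝ} {p : Fin (n + 1) → ℝ} {w : Fin (n + 1) → X}
    {k : Fin (n + 1)} (hs : s ∈ Ico (0:ℝ) 1) (hp : p ∈ stdSimplex ℝ (Fin (n + 1)))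
    (hk : 0 < p k) (he : A.Eats (w k) a) :
    A.op s a (A.mixVec n p w) = A.op s (w k) (A.mixVec n p w) := by
  rcases hs.1.eq_or_lt with rfl | hs0
  · simp only [A.proj0]
  replace hs : s ∈ Ioo (0:ℝ) 1 := ⟨hs0, hs.2⟩
  clear hs0
  induction n generalizing s with
  | zero =>
    obtain rfl := Fin.fin_one_eq_zero k
    rw [mixVec, A.op_eq_right_of_eats he (Ioo_subset_Ico_self hs), A.op_self (Ioo_subset_Icc_self hs)]
  | succ n ih =>
    by_cases h1 : p 0 = 1
    · obtain rfl := eq_of_mem_stdSimplex_of_eq_one hp h1 hk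
      simp only [mixVec, if_pos h1]
      rw [A.op_eq_right_of_eats he (Ioo_subset_Ico_self hs), A.op_self (Ioo_subset_Icc_self hs)]
    have h0 := mem_Ico_of_mem_stdSimplex_of_ne_one hp h1
    simp only [mixVec, if_neg h1]
    cases k using Fin.cases with
    | zero =>
      have h0' : p 0 ∈ Ioo (0:ℝ) 1 := ⟨hk, h0.2⟩
      have ht := div_add_sub_mul_mem_Ioo hs h0'
      rw [A.op_assoc_symm hs h0', A.op_assoc_symm hs h0',
        A.op_eq_right_of_eats he (Ioo_subset_Ico_self ht), A.op_self (Ioo_subset_Icc_self ht)]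
    | succ k =>
      rw [A.op_left_comm hs h0, A.op_left_comm hs h0, ih (tail_mem_stdSimplex hp h0.2)
        (div_pos hk (by linarith [h0.2])) he (div_one_sub_mul_one_sub_mem_Ioo hs h0)]

theorem mixVec_eq_of_eq_or_eats {n : ℕ} {p : Fin (n + 1) → ℝ} {w w' : Fin (n + 1) → X}
    {j : Fin (n + 1)} (hp : p ∈ stdSimplex ℝ (Fin (n + 1))) (hj : 0 < p j)
    (hw : ∀ i, w' i = w i ∨ A.Eats (w j) (w i) ∧ w' i = w j) :
    A.mixVec n p w = A.mixVec n p w' := by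
  induction n with
  | zero =>
    obtain rfl := Fin.fin_one_eq_zero j
    rcases hw 0 with h | ⟨-, h⟩ <;> exact h.symm
  | succ n ih =>
    by_cases h1 : p 0 = 1
    · obtain rfl := eq_of_mem_stdSimplex_of_eq_one hp h1 hj
      simp only [mixVec, if_pos h1]
      rcases hw 0 with h | ⟨-, h⟩ <;> exact h.symm
    have h0 := mem_Ico_of_mem_stdSimplex_of_ne_one hp h1
    have htail := tail_mem_stdSimplex hp h0.2
    simp only [mixVec, if_neg h1]
    cases j using Fin.cases with
    | zero =>
      have hw0 : w' 0 = w 0 := by rcases hw 0 with h | ⟨-, h⟩ <;> exact h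
      rw [hw0]
      exact A.op_mixVec_eq_of_eq_or_eats ⟨hj, h0.2⟩ htail fun i => hw i.succ
    | succ j =>
      have hj' : 0 < p j.succ / (1 - p 0) := div_pos hj (by linarith [h0.2])
      rcases hw 0 with h | ⟨he, h⟩
      · rw [h, ih htail hj' fun i => hw i.succ]
      · rw [h, A.op_mixVec_eq_of_eats (w := fun i => w i.succ) h0 htail hj' he,
          ih htail hj' fun i => hw i.succ]

end ConvexAlg

/-- Lemma 2.8: let `⟨X, ⊕_p⟩` be a convex algebra, `x_1, …, x_n ∈ X`,
`p_1, …, p_n ≥ 0` with `Σ p_i = 1`, and `j` with `p_j > 0`.  If `y_i = x_j`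
whenever `x_j ⊳ x_i` and `y_i = x_i` otherwise, then
`⊕_{i=1}^n p_i x_i = ⊕_{i=1}^n p_i y_i`. -/
theorem stmt_13 {X : Type*} (A : ConvexAlg X) (n : ℕ)
    (p : Fin (n + 1) → ℝ) (x : Fin (n + 1) → X)
    (hp : ∀ i, 0 ≤ p i) (hsum : ∑ i, p i = 1)
    (j : Fin (n + 1)) (hj : 0 < p j)
    (y : Fin (n + 1) → X)
    (hy : ∀ i, (A.Eats (x j) (x i) ∧ y i = x j) ∨ (¬ A.Eats (x j) (x i) ∧ y i = x i)) :
    A.mixVec n p x = A.mixVec n p y :=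
  A.mixVec_eq_of_eq_or_eats ⟨hp, hsum⟩ hj fun i => (hy i).symm.imp And.right id
end

section
/- Let ⟨[0,1], ⊕_p⟩ be a convex algebra satisfying (MO) and (UC). Let A be a nonempty set, (x_a)_{a∈A} ∈ [0,1]^A, and (p_a)_{a∈A} a finitely supported family of nonnegative reals with Σ_{a∈A} p_a = 1. Let a_0 ∈ A with p_{a_0} > 0. Then ⊕_{a∈A} p_a x_a = ⊕_{a∈A} p_a · max{x_a, V_{0, x_{a_0}}}. -/
open Set Filter Topology Classical

/-- The convex combination of a finite list of (weight, element) pairs, built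
inductively from the binary operations: with `W` the total weight of the list,
`⊕ ((p,x) :: l) = x` if `p = W` (i.e. the normalized first weight is `1`), and
`x ⊕_{p/W} (⊕ l)` otherwise.  (For a list of total weight `1` this is exactly
`⊕ p_i x_i = x_1 ⊕_{p_1} (⊕ (p_i/(1-p_1)) x_i)` when `p_1 < 1`, and `x_1` when
`p_1 = 1`.) -/
noncomputable def UCA.mixList (A : UCA) : List (ℝ × ℝ) → ℝ
  | [] => 0
  | (p, x) :: l =>
      if p = p + (l.map Prod.fst).sum then x
      else A.op (p / (p + (l.map Prod.fst).sum)) x (A.mixList l)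

/-- The convex combination `⊕_{a∈A} p_a x_a` of a finitely supported family:
the finite convex combination over the support of `(p_a)` (by parametric
commutativity and associativity it does not depend on the enumeration of the
support). -/
noncomputable def UCA.mixFam (A : UCA) {α : Type*} (p : α → ℝ) (x : α → ℝ) : ℝ :=
  if h : (Function.support p).Finite then
    A.mixList (h.toFinset.toList.map fun a => (p a, x a))
  else 0

/-!
The key identity is `y ⊕_p V_{0,y} = y ⊕_p 0` for `p ∈ (0,1)`. Since
`y ⊕_p (y ⊕_c 0) = y ⊕_{p+c-pc} 0`, the left side is at most `y ⊕_q 0` for every `q ∈ (p,1)`,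
and `q ↦ y ⊕_q 0` is right-continuous at `p`: take a continuity point `q₀ ∈ (p,1)` of this
monotone map, write `y ⊕_p 0 = (y ⊕_{q₀} 0) ⊕_{p/q₀} 0` and apply (UC) at `y ⊕_{q₀} 0`.
With (MO) this gives `y ⊕_p max(x, v) = y ⊕_p x` whenever `v ≤ V_{0,y}`. As `V_{0,·}` can only
grow under mixing, an induction along the list defining the convex combination lets the summand
`x_{a₀}` absorb the truncation of every other summand at `V_{0,x_{a₀}}`.
-/

open unitInterval

theorem add_sub_mul_mem_Ioo_s14 {s w : ℝ} (hs : s ∈ Ioo (0:ℝ) 1) (hw : w ∈ Ioo (0:ℝ) 1) :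
    s + w - s * w ∈ Ioo (0:ℝ) 1 :=
  ⟨by nlinarith [hs.1, hs.2, hw.1], by nlinarith [hs.2, hw.2]⟩

theorem div_add_sub_mul_mem_Ioo_s14 {s w : ℝ} (hs : s ∈ Ioo (0:ℝ) 1) (hw : w ∈ Ioo (0:ℝ) 1) :
    s / (s + w - s * w) ∈ Ioo (0:ℝ) 1 :=
  have hK := add_sub_mul_mem_Ioo_s14 hs hw
  ⟨div_pos hs.1 hK.1, (div_lt_one hK.1).2 (by nlinarith [hs.2, hw.1])⟩

theorem Real.exists_continuousAt_of_monotoneOn_Ioo {f : ℝ → ℝ} {a b : ℝ} (hab : a < b)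
    (hf : MonotoneOn f (Ioo a b)) : ∃ c ∈ Ioo a b, ContinuousAt f c := by
  by_contra! h
  have hcount : (Ioo a b).Countable := hf.countable_not_continuousWithinAt.mono
    fun c hc => show c ∈ Ioo a b ∧ _ from
      ⟨hc, fun hcont => h c hc (hcont.continuousAt (isOpen_Ioo.mem_nhds hc))⟩
  exact (Cardinal.Real.Ioo_countable_iff.1 hcount).not_gt hab

namespace UCA

variable (A : UCA)

theorem op_mem {p x y : ℝ} (hp : p ∈ Ioo (0:ℝ) 1) (hx : x ∈ I) (hy : y ∈ I) :
    A.op p x y ∈ I :=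
  A.mem p (Ioo_subset_Icc_self hp) x hx y hy

theorem op_op_zero {a b y : ℝ} (ha : a ∈ Ioo (0:ℝ) 1) (hb : b ∈ Ioo (0:ℝ) 1) (hy : y ∈ I) :
    A.op b (A.op a y 0) 0 = A.op (a * b) y 0 := by
  have hc : (1 - a) * b / (1 - a * b) ∈ Ioo (0:ℝ) 1 := by
    have h : 0 < 1 - a * b := by nlinarith [ha.1, ha.2, hb.1, hb.2]
    exact ⟨div_pos (by nlinarith [ha.2, hb.1]) h, (div_lt_one h).2 (by nlinarith [ha.1, hb.2])⟩
  rw [A.assoc a ha b hb y hy 0 zero_mem 0 zero_mem, A.idem _ hc 0 zero_mem]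

theorem op_op_reassoc {s w a b c : ℝ} (hs : s ∈ Ioo (0:ℝ) 1) (hw : w ∈ Ioo (0:ℝ) 1)
    (ha : a ∈ I) (hb : b ∈ I) (hc : c ∈ I) :
    A.op s a (A.op w b c) = A.op (s + w - s * w) (A.op (s / (s + w - s * w)) a b) c := by
  have hK := add_sub_mul_mem_Ioo_s14 hs hw
  have hsK : s / (s + w - s * w) * (s + w - s * w) = s := div_mul_cancel₀ _ hK.1.ne'
  have hwK : (1 - s / (s + w - s * w)) * (s + w - s * w) / (1 - s) = w := by
    have : (1:ℝ) - s ≠ 0 := by linarith [hs.2]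
    field_simp [hK.1.ne']
    ring
  rw [A.assoc _ (div_add_sub_mul_mem_Ioo_s14 hs hw) _ hK a ha b hb c hc, hsK, hwK]

theorem op_op_self_zero {p c y : ℝ} (hp : p ∈ Ioo (0:ℝ) 1) (hc : c ∈ Ioo (0:ℝ) 1)
    (hy : y ∈ I) : A.op p y (A.op c y 0) = A.op (p + c - p * c) y 0 := by
  rw [A.op_op_reassoc hp hc hy hy zero_mem, A.idem _ (div_add_sub_mul_mem_Ioo_s14 hp hc) y hy]

theorem V_le_op_s14 {y q : ℝ} (hy : y ∈ I) (hq : q ∈ Ioc (0:ℝ) 1) : A.V 0 y ≤ A.op q y 0 :=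
  csInf_le ⟨0, forall_mem_image.2 fun t ht => (A.mem t (Ioc_subset_Icc_self ht) y hy 0
    zero_mem).1⟩ (mem_image_of_mem _ hq)

theorem le_V_iff {y c : ℝ} (hy : y ∈ I) : c ≤ A.V 0 y ↔ ∀ q ∈ Ioc (0:ℝ) 1, c ≤ A.op q y 0 :=
  ⟨fun h _ hq => h.trans (A.V_le_op_s14 hy hq), fun h =>
    le_csInf ⟨_, mem_image_of_mem _ (right_mem_Ioc.2 one_pos)⟩ (forall_mem_image.2 h)⟩

theorem V_le_self {y : ℝ} (hy : y ∈ I) : A.V 0 y ≤ y := by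
  simpa only [A.proj1 y hy 0 zero_mem] using A.V_le_op_s14 hy (right_mem_Ioc.2 one_pos)

theorem V_mem {y : ℝ} (hy : y ∈ I) : A.V 0 y ∈ I :=
  ⟨(A.le_V_iff hy).2 fun q hq => (A.mem q (Ioc_subset_Icc_self hq) y hy 0 zero_mem).1,
    (A.V_le_self hy).trans hy.2⟩

variable {A}

theorem MO.op_le_op_right (hMO : A.MO) {p x y y' : ℝ} (hp : p ∈ Ioo (0:ℝ) 1) (hx : x ∈ I)
    (hy : y ∈ I) (hy' : y' ∈ I) (h : y ≤ y') : A.op p x y ≤ A.op p x y' := by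
  rw [A.comm p hp x hx y hy, A.comm p hp x hx y' hy']
  exact hMO y hy y' hy' x hx (1 - p) (Ioo.one_sub_mem hp) h

theorem MO.op_zero_le (hMO : A.MO) {b y : ℝ} (hb : b ∈ Ioo (0:ℝ) 1) (hy : y ∈ I) :
    A.op b y 0 ≤ y :=
  calc A.op b y 0 ≤ A.op b y y := hMO.op_le_op_right hb hy zero_mem hy hy.1
    _ = y := A.idem b hb y hy

theorem MO.monotoneOn_op_zero (hMO : A.MO) {y : ℝ} (hy : y ∈ I) :
    MonotoneOn (fun q => A.op q y 0) (Ioc (0:ℝ) 1) := by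
  intro q hq q' hq' hqq'
  rcases hqq'.eq_or_lt with rfl | hlt
  · rfl
  rcases hq'.2.eq_or_lt with rfl | hq'1
  · simpa only [A.proj1 y hy 0 zero_mem] using hMO.op_zero_le ⟨hq.1, hlt⟩ hy
  have hq'q : q' * (q / q') = q := mul_div_cancel₀ _ (hq.1.trans hlt).ne'
  have hdiv : q / q' ∈ Ioo (0:ℝ) 1 := ⟨div_pos hq.1 hq'.1, (div_lt_one hq'.1).2 hlt⟩
  calc A.op q y 0 = A.op (q / q') (A.op q' y 0) 0 := by
        rw [A.op_op_zero ⟨hq'.1, hq'1⟩ hdiv hy, hq'q]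
    _ ≤ A.op q' y 0 := hMO.op_zero_le hdiv (A.op_mem ⟨hq'.1, hq'1⟩ hy zero_mem)

theorem V_le_V_op_left (hMO : A.MO) {s z z' : ℝ} (hs : s ∈ Ioo (0:ℝ) 1) (hz : z ∈ I)
    (hz' : z' ∈ I) : A.V 0 z ≤ A.V 0 (A.op s z z') := by
  have hzz' : A.op s z 0 ≤ A.op s z z' := hMO.op_le_op_right hs hz zero_mem hz' hz'.1
  refine (A.le_V_iff (A.op_mem hs hz hz')).2 fun t ht => ?_
  rcases ht.2.eq_or_lt with rfl | ht1
  · rw [A.proj1 _ (A.op_mem hs hz hz') 0 zero_mem]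
    exact (A.V_le_op_s14 hz ⟨hs.1, hs.2.le⟩).trans hzz'
  calc A.V 0 z ≤ A.op (s * t) z 0 := A.V_le_op_s14 hz ⟨mul_pos hs.1 ht.1, by nlinarith [hs.2, ht.1]⟩
    _ = A.op t (A.op s z 0) 0 := (A.op_op_zero hs ⟨ht.1, ht1⟩ hz).symm
    _ ≤ A.op t (A.op s z z') 0 :=
        hMO _ (A.op_mem hs hz zero_mem) _ (A.op_mem hs hz hz') 0 zero_mem t ⟨ht.1, ht1⟩ hzz'

theorem V_le_V_op_right (hMO : A.MO) {s z z' : ℝ} (hs : s ∈ Ioo (0:ℝ) 1) (hz : z ∈ I)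
    (hz' : z' ∈ I) : A.V 0 z' ≤ A.V 0 (A.op s z z') := by
  rw [A.comm s hs z hz z' hz']
  exact V_le_V_op_left hMO (Ioo.one_sub_mem hs) hz' hz

theorem UC.le_op_zero_of_eventually_le (hUC : A.UC) {t y c : ℝ} (ht : t ∈ Ioo (0:ℝ) 1)
    (hy : y ∈ Ico (0:ℝ) 1) (h : ∀ᶠ ε in 𝓝[>] (0:ℝ), c ≤ A.op t (y + ε) ε) :
    c ≤ A.op t y 0 := by
  have hbdd : IsBoundedUnder (· ≤ ·) (𝓝[>] (0:ℝ)) fun ε => A.op t (y + ε) (0 + ε) := by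
    refine ⟨1, eventually_map.2 ?_⟩
    filter_upwards [Ioo_mem_nhdsGT (sub_pos.2 hy.2)] with ε hε
    exact (A.op_mem ht ⟨by linarith [hy.1, hε.1], by linarith [hε.2]⟩
      ⟨by linarith [hε.1], by linarith [hy.1, hε.2]⟩).2
  calc c ≤ limsup (fun ε => A.op t (y + ε) (0 + ε)) (𝓝[>] 0) :=
        le_limsup_of_frequently_le (by simpa only [zero_add] using h.frequently) hbdd
    _ ≤ A.op t y 0 := hUC y hy 0 ⟨le_rfl, one_pos⟩ t ht

theorem UC.le_op_zero_of_forall_gt (hMO : A.MO) (hUC : A.UC) {p y c : ℝ}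
    (hp : p ∈ Ioo (0:ℝ) 1) (hy : y ∈ I) (h : ∀ q ∈ Ioo p 1, c ≤ A.op q y 0) :
    c ≤ A.op p y 0 := by
  obtain ⟨q₀, hq₀, hcont⟩ := Real.exists_continuousAt_of_monotoneOn_Ioo hp.2
    ((hMO.monotoneOn_op_zero hy).mono fun q hq => ⟨hp.1.trans hq.1, hq.2.le⟩)
  have hq₀' : q₀ ∈ Ioo (0:ℝ) 1 := ⟨hp.1.trans hq₀.1, hq₀.2⟩
  set t := p / q₀
  have ht : t ∈ Ioo (0:ℝ) 1 := ⟨div_pos hp.1 hq₀'.1, (div_lt_one hq₀'.1).2 hq₀.1⟩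
  have hq₀t : q₀ * t = p := mul_div_cancel₀ _ hq₀'.1.ne'
  have hscale : ∀ q ∈ Ioo q₀ 1, q * t ∈ Ioo p 1 := fun q hq =>
    ⟨hq₀t ▸ mul_lt_mul_of_pos_right hq.1 ht.1, by nlinarith [ht.1, ht.2, hq.2, hq₀'.1, hq.1]⟩
  have hg₀ := A.op_mem hq₀' hy zero_mem
  rw [← hq₀t, ← A.op_op_zero hq₀' ht hy]
  rcases hg₀.2.lt_or_eq with hlt | heq
  · refine hUC.le_op_zero_of_eventually_le ht ⟨hg₀.1, hlt⟩ ?_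
    filter_upwards [Ioo_mem_nhdsGT (sub_pos.2 hlt)] with ε hε
    have hyε : A.op q₀ y 0 + ε ∈ I := ⟨by linarith [hg₀.1, hε.1], by linarith [hε.2]⟩
    obtain ⟨q₁, hq₁g, hq₁⟩ := ((hcont.eventually (gt_mem_nhds (lt_add_of_pos_right _ hε.1))
      ).filter_mono nhdsWithin_le_nhds |>.and (Ioo_mem_nhdsGT hq₀.2)).exists
    have hq₁' : q₁ ∈ Ioo (0:ℝ) 1 := ⟨hq₀'.1.trans hq₁.1, hq₁.2⟩
    calc c ≤ A.op (q₁ * t) y 0 := h _ (hscale q₁ hq₁)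
      _ = A.op t (A.op q₁ y 0) 0 := (A.op_op_zero hq₁' ht hy).symm
      _ ≤ A.op t (A.op q₀ y 0 + ε) 0 :=
          hMO _ (A.op_mem hq₁' hy zero_mem) _ hyε 0 zero_mem t ht hq₁g.le
      _ ≤ A.op t (A.op q₀ y 0 + ε) ε :=
          hMO.op_le_op_right ht hyε zero_mem ⟨hε.1.le, by linarith [hε.2, hg₀.1]⟩ hε.1.le
  · rw [heq]
    calc c ≤ A.op t y 0 := h t ⟨(lt_div_iff₀ hq₀'.1).2 (mul_lt_of_lt_one_right hp.1 hq₀.2), ht.2⟩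
      _ ≤ A.op t 1 0 := hMO y hy 1 one_mem 0 zero_mem t ht hy.2

theorem op_V_eq_op_zero (hMO : A.MO) (hUC : A.UC) {p y : ℝ} (hp : p ∈ Ioo (0:ℝ) 1)
    (hy : y ∈ I) : A.op p y (A.V 0 y) = A.op p y 0 := by
  refine le_antisymm (hUC.le_op_zero_of_forall_gt hMO hp hy fun q hq => ?_)
    (hMO.op_le_op_right hp hy zero_mem (A.V_mem hy) (A.V_mem hy).1)
  set c := (q - p) / (1 - p)
  have h1p : 0 < 1 - p := sub_pos.2 hp.2
  have hc : c ∈ Ioo (0:ℝ) 1 :=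
    ⟨div_pos (sub_pos.2 hq.1) h1p, (div_lt_one h1p).2 (by linarith [hq.2])⟩
  have hpc : p + c - p * c = q := by
    simp only [c]
    field_simp
    ring
  calc A.op p y (A.V 0 y) ≤ A.op p y (A.op c y 0) := hMO.op_le_op_right hp hy (A.V_mem hy)
        (A.op_mem hc hy zero_mem) (A.V_le_op_s14 hy ⟨hc.1, hc.2.le⟩)
    _ = A.op q y 0 := by rw [A.op_op_self_zero hp hc hy, hpc]

theorem op_max_eq_of_le_V (hMO : A.MO) (hUC : A.UC) {p x y v : ℝ} (hp : p ∈ Ioo (0:ℝ) 1)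
    (hx : x ∈ I) (hy : y ∈ I) (hv : v ≤ A.V 0 y) : A.op p y (max x v) = A.op p y x := by
  have hV := A.V_mem hy
  have hxv : max x v ∈ I := ⟨hx.1.trans (le_max_left _ _), max_le hx.2 (hv.trans hV.2)⟩
  have hxV : max x (A.V 0 y) ∈ I := ⟨hx.1.trans (le_max_left _ _), max_le hx.2 hV.2⟩
  refine le_antisymm ?_ (hMO.op_le_op_right hp hy hx hxv (le_max_left _ _))
  calc A.op p y (max x v) ≤ A.op p y (max x (A.V 0 y)) :=
        hMO.op_le_op_right hp hy hxv hxV (max_le_max_left x hv)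
    _ ≤ A.op p y x := by
        rcases le_total (A.V 0 y) x with h | h
        · rw [max_eq_left h]
        · rw [max_eq_right h, op_V_eq_op_zero hMO hUC hp hy]
          exact hMO.op_le_op_right hp hy zero_mem hx hx.1

end UCA

def IsFormalMix (l : List (ℝ × ℝ)) : Prop := ∀ e ∈ l, 0 < e.1 ∧ e.2 ∈ I

namespace IsFormalMix

variable {l : List (ℝ × ℝ)} {q x : ℝ}

theorem head (hl : IsFormalMix ((q, x) :: l)) : 0 < q ∧ x ∈ I := hl _ List.mem_cons_self

theorem tail (hl : IsFormalMix ((q, x) :: l)) : IsFormalMix l :=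
  fun e he => hl e (List.mem_cons_of_mem _ he)

theorem weight_mem (hl : IsFormalMix ((q, x) :: l)) (hne : l ≠ []) :
    q / (q + (l.map Prod.fst).sum) ∈ Ioo (0:ℝ) 1 := by
  have hS : 0 < (l.map Prod.fst).sum := List.sum_pos _
    (by simpa using fun a b hab => (hl.tail (a, b) hab).1) (by simpa using hne)
  have hq := hl.head.1
  exact ⟨div_pos hq (by linarith), (div_lt_one (by linarith)).2 (by linarith)⟩

theorem map_max (hl : IsFormalMix l) {v : ℝ} (hv : v ≤ 1) :
    IsFormalMix (l.map fun e => (e.1, max e.2 v)) := by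
  simp only [IsFormalMix, List.mem_map]
  rintro _ ⟨e, he, rfl⟩
  exact ⟨(hl e he).1, (hl e he).2.1.trans (le_max_left _ _), max_le (hl e he).2.2 hv⟩

end IsFormalMix

theorem List.map_fst_map_max (l : List (ℝ × ℝ)) (v : ℝ) :
    (l.map fun e => (e.1, max e.2 v)).map Prod.fst = l.map Prod.fst := by
  simp [Function.comp_def]

namespace UCA

variable (A : UCA) {l : List (ℝ × ℝ)} {q x : ℝ}

theorem mixList_singleton (q x : ℝ) : A.mixList [(q, x)] = x := by simp [mixList]

theorem mixList_cons_of_ne_nil (hl : IsFormalMix ((q, x) :: l)) (hne : l ≠ []) :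
    A.mixList ((q, x) :: l) = A.op (q / (q + (l.map Prod.fst).sum)) x (A.mixList l) := by
  refine if_neg fun h => (hl.weight_mem hne).2.ne ?_
  rw [← h, div_self hl.head.1.ne']

theorem mixList_mem (hl : IsFormalMix l) (hne : l ≠ []) : A.mixList l ∈ I := by
  induction l with
  | nil => exact absurd rfl hne
  | cons e l ih =>
    obtain ⟨q, x⟩ := e
    rcases eq_or_ne l [] with rfl | hl'
    · simpa only [mixList_singleton] using hl.head.2
    · rw [A.mixList_cons_of_ne_nil hl hl']
      exact A.op_mem (hl.weight_mem hl') hl.head.2 (ih hl.tail hl')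

variable {A}

theorem V_le_V_mixList (hMO : A.MO) (hl : IsFormalMix l) {e : ℝ × ℝ} (he : e ∈ l) :
    A.V 0 e.2 ≤ A.V 0 (A.mixList l) := by
  induction l with
  | nil => exact absurd he List.not_mem_nil
  | cons e' l ih =>
    obtain ⟨q, x⟩ := e'
    rcases eq_or_ne l [] with rfl | hl'
    · rw [List.mem_singleton.1 he, mixList_singleton]
    rw [A.mixList_cons_of_ne_nil hl hl']
    rcases List.mem_cons.1 he with rfl | he
    · exact V_le_V_op_left hMO (hl.weight_mem hl') hl.head.2 (A.mixList_mem hl.tail hl')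
    · exact (ih hl.tail he).trans
        (V_le_V_op_right hMO (hl.weight_mem hl') hl.head.2 (A.mixList_mem hl.tail hl'))

theorem op_mixList_map_max (hMO : A.MO) (hUC : A.UC) (hl : IsFormalMix l) {v s y : ℝ}
    (hs : s ∈ Ioo (0:ℝ) 1) (hy : y ∈ I) (hv : v ≤ A.V 0 y) :
    A.op s y (A.mixList (l.map fun e => (e.1, max e.2 v))) = A.op s y (A.mixList l) := by
  induction l generalizing s y with
  | nil => rfl
  | cons e l ih =>
    obtain ⟨q, x⟩ := e
    have hx := hl.head.2
    rcases eq_or_ne l [] with rfl | hl'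
    · simp only [List.map_cons, List.map_nil, mixList_singleton]
      exact op_max_eq_of_le_V hMO hUC hs hx hy hv
    have hv1 : v ≤ 1 := hv.trans (A.V_mem hy).2
    have hlv := hl.map_max hv1
    have hw := hl.weight_mem hl'
    have hπ := div_add_sub_mul_mem_Ioo_s14 hs hw
    have hxv : max x v ∈ I := (hlv _ List.mem_cons_self).2
    rw [List.map_cons, A.mixList_cons_of_ne_nil hlv (by simpa using hl'), List.map_fst_map_max,
      A.mixList_cons_of_ne_nil hl hl',
      A.op_op_reassoc hs hw hy hxv (A.mixList_mem hlv.tail (by simpa using hl')),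
      A.op_op_reassoc hs hw hy hx (A.mixList_mem hl.tail hl'),
      op_max_eq_of_le_V hMO hUC hπ hx hy hv]
    exact ih hl.tail (add_sub_mul_mem_Ioo_s14 hs hw) (A.op_mem hπ hy hx)
      (hv.trans (V_le_V_op_left hMO hπ hy hx))

theorem mixList_map_max (hMO : A.MO) (hUC : A.UC) (hl : IsFormalMix l) {e : ℝ × ℝ}
    (he : e ∈ l) {v : ℝ} (hv : v ≤ A.V 0 e.2) :
    A.mixList (l.map fun e => (e.1, max e.2 v)) = A.mixList l := by
  induction l with
  | nil => exact absurd he List.not_mem_nil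
  | cons e' l ih =>
    obtain ⟨q, x⟩ := e'
    have hx := hl.head.2
    have hv1 : v ≤ 1 := hv.trans (A.V_mem (hl e he).2).2
    have hlv := hl.map_max hv1
    rcases eq_or_ne l [] with rfl | hl'
    · rw [List.mem_singleton.1 he] at hv
      simp only [List.map_cons, List.map_nil, mixList_singleton]
      exact max_eq_left (hv.trans (A.V_le_self hx))
    rw [List.map_cons, A.mixList_cons_of_ne_nil hlv (by simpa using hl'), List.map_fst_map_max,
      A.mixList_cons_of_ne_nil hl hl']
    rcases List.mem_cons.1 he with rfl | he
    · rw [max_eq_left (hv.trans (A.V_le_self hx))]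
      exact op_mixList_map_max hMO hUC hl.tail (hl.weight_mem hl') hx hv
    · have hM := A.mixList_mem hl.tail hl'
      rw [ih hl.tail he, A.comm _ (hl.weight_mem hl') _ (hlv _ List.mem_cons_self).2 _ hM,
        A.comm _ (hl.weight_mem hl') _ hx _ hM]
      exact op_max_eq_of_le_V hMO hUC (Ioo.one_sub_mem (hl.weight_mem hl')) hx hM
        (hv.trans (V_le_V_mixList hMO hl.tail he))

end UCA

theorem stmt_14_general {α : Type*} (A : UCA) (hMO : A.MO) (hUC : A.UC)
    (p : α → ℝ) (x : α → ℝ) (hx : ∀ a, x a ∈ Set.Icc (0:ℝ) 1)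
    (hp : ∀ a, 0 ≤ p a) (a₀ : α) (ha₀ : 0 < p a₀) :
    A.mixFam p x = A.mixFam p (fun a => max (x a) (A.V 0 (x a₀))) := by
  unfold UCA.mixFam
  split_ifs with hfin
  · have hl : IsFormalMix (hfin.toFinset.toList.map fun a => (p a, x a)) := by
      simp only [IsFormalMix, List.mem_map, Finset.mem_toList, Finite.mem_toFinset,
        Function.mem_support]
      rintro _ ⟨a, ha, rfl⟩
      exact ⟨(hp a).lt_of_ne' ha, hx a⟩
    have ha₀l : (p a₀, x a₀) ∈ hfin.toFinset.toList.map fun a => (p a, x a) :=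
      List.mem_map_of_mem (by simpa using ha₀.ne')
    rw [← UCA.mixList_map_max hMO hUC hl ha₀l le_rfl, List.map_map]
    rfl
  · rfl

/-- Corollary 3.4: let `⟨[0,1], ⊕_p⟩` be a convex algebra satisfying (MO) and (UC),
`A` a nonempty set, `(x_a) ∈ [0,1]^A`, `(p_a)` a finitely supported family of
nonnegative reals with `Σ p_a = 1`, and `a₀` with `p_{a₀} > 0`.  Then
`⊕_{a} p_a x_a = ⊕_{a} p_a (max {x_a, V_{0,x_{a₀}}})`. -/
theorem stmt_14 {α : Type*} [Nonempty α] (A : UCA) (hMO : A.MO) (hUC : A.UC)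
    (p : α → ℝ) (x : α → ℝ) (hx : ∀ a, x a ∈ Set.Icc (0:ℝ) 1)
    (hp : ∀ a, 0 ≤ p a) (hfin : (Function.support p).Finite)
    (hsum : ∑ᶠ a, p a = 1) (a₀ : α) (ha₀ : 0 < p a₀) :
    A.mixFam p x = A.mixFam p (fun a => max (x a) (A.V 0 (x a₀))) :=
  stmt_14_general A hMO hUC p x hx hp a₀ ha₀
end
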